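/- Let 𝐩 > 1, 𝐪 > 𝐩 - 1, 𝐍, σ ∈ ℝ. Let w be a positive C² solution of the equation -(|w'|^{𝐩-2}w')' - ((𝐍-1)/r)|w'|^{𝐩-2}w' = ε r^σ w^𝐪 (ε = ±1) on an interval where w' ≠ 0. Define s(t) = -r w'(r)/w(r) and z(t) = -ε r^{1+σ} w(r)^𝐪 |w'(r)|^{-𝐩} w'(r), with t = ln r. Then (s,z) solves the autonomous system s_t = s((𝐩-𝐍)/(𝐩-1) + s + z/(𝐩-1)), z_t = z(𝐍 + σ - 𝐪 s - z), and w(r) = r^{-γ}(|s|^{𝐩-1}|z|)^{1/(𝐪+1-𝐩)} where γ = (𝐩+σ)/(𝐪+1-𝐩). -/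

import Mathlib

/-!
With the flux `φ = |w'|^(p-2) w'` one has `z = -ε r^(1+σ) w^q / φ`, so the equation says exactly
`z = N - 1 + r φ'/φ = N - 1 + (p - 1) r w''/w'`. In the variable `t = ln r` both `s` and `z` are
products of powers of `r`, `w`, `w'`, whose logarithmic derivatives are
`1 + s + r w''/w'` and `1 + σ - q s + (1 - p) r w''/w'`; eliminating `r w''/w'` gives the system.
Finally `|s|^(p-1) |z| = r^(p+σ) w^(q+1-p)`, which is solved for `w`.
-/

open Real

lemma hasDerivAt_abs_rpow_mul_self (e : ℝ) {c : ℝ} (hc : c ≠ 0) :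
    HasDerivAt (fun x : ℝ => |x| ^ e * x) ((e + 1) * |c| ^ e) c := by
  have hA : 0 < |c| := abs_pos.mpr hc
  have hsign : (SignType.sign c : ℝ) * c = |c| := by
    rcases hc.lt_or_gt with h | h
    · simp [sign_neg h, abs_of_neg h]
    · simp [sign_pos h, abs_of_pos h]
  have hpow : |c| ^ (e - 1) * |c| = |c| ^ e := by
    rw [← rpow_add_one hA.ne']; ring_nf
  refine (((hasDerivAt_rpow_const (p := e) (Or.inl hA.ne')).comp c
    (hasDerivAt_abs hc)).mul (hasDerivAt_id c)).congr_deriv ?_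
  simp only [Function.comp_apply, id, mul_one]
  linear_combination e * hpow + e * |c| ^ (e - 1) * hsign

lemma abs_rpow_sub_two_mul_self_mul_abs_rpow_neg_mul_self (p : ℝ) {x : ℝ} (hx : x ≠ 0) :
    (|x| ^ (p - 2) * x) * (|x| ^ (-p) * x) = 1 := by
  have hA : 0 < |x| := abs_pos.mpr hx
  rw [mul_mul_mul_comm, ← abs_mul_abs_self x, ← rpow_add hA, ← mul_assoc,
    ← rpow_add_one hA.ne', ← rpow_add_one hA.ne', show p - 2 + -p + 1 + 1 = 0 by ring, rpow_zero]

theorem ContDiffOn.hasDerivAt_deriv {𝕜 F : Type*} [NontriviallyNormedField 𝕜]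
    [NormedAddCommGroup F] [NormedSpace 𝕜 F] {f : 𝕜 → F} {U : Set 𝕜} {x : 𝕜}
    (hf : ContDiffOn 𝕜 2 f U) (hU : IsOpen U) (hx : x ∈ U) :
    HasDerivAt (deriv f) (deriv (deriv f) x) x :=
  (((hf.deriv_of_isOpen hU (by norm_num : (1 : WithTop ℕ∞) + 1 ≤ 2)).differentiableOn
    one_ne_zero).differentiableAt (hU.mem_nhds hx)).hasDerivAt

namespace HardyHenon

/-- The paper's coordinates `s` and `z`, as functions of `r`, `w(r)` and `w'(r)`. -/
noncomputable def s (r w w' : ℝ) : ℝ := -(r * w' / w)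

noncomputable def z (p q σ ε r w w' : ℝ) : ℝ := -(ε * r ^ (1 + σ) * w ^ q * |w'| ^ (-p) * w')

lemma abs_s_rpow_mul_abs_z {p q σ ε r w w' : ℝ} (hε : |ε| = 1) (hr : 0 < r) (hw : 0 < w)
    (hw' : w' ≠ 0) :
    |s r w w'| ^ (p - 1) * |z p q σ ε r w w'| = r ^ (p + σ) * w ^ (q + 1 - p) := by
  have hA : 0 < |w'| := abs_pos.mpr hw'
  have habs_s : |s r w w'| = r * |w'| / w := by
    rw [s, abs_neg, abs_div, abs_mul, abs_of_pos hr, abs_of_pos hw]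
  have habs_z : |z p q σ ε r w w'| = r ^ (1 + σ) * w ^ q * (|w'| ^ (-p) * |w'|) := by
    rw [z, abs_neg, abs_mul, abs_mul, abs_mul, abs_mul, hε, abs_of_pos (rpow_pos_of_pos hr _),
      abs_of_pos (rpow_pos_of_pos hw _), abs_of_pos (rpow_pos_of_pos hA _)]
    ring
  have hr_pow : r ^ (p - 1) * r ^ (1 + σ) = r ^ (p + σ) := by
    rw [← rpow_add hr]; ring_nf
  have hw_pow : w ^ (q + 1 - p) * w ^ (p - 1) = w ^ q := by
    rw [← rpow_add hw]; ring_nf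
  have hA_pow : |w'| ^ (p - 1) * (|w'| ^ (-p) * |w'|) = 1 := by
    rw [← rpow_add_one hA.ne', ← rpow_add hA]; norm_num
  rw [habs_s, habs_z, div_rpow (by positivity) hw.le, mul_rpow hr.le hA.le, ← hr_pow, ← hw_pow]
  field_simp
  linear_combination hA_pow

lemma eq_rpow_mul_abs_s_rpow_mul_abs_z {p q σ ε r w w' : ℝ} (hε : |ε| = 1) (hpq : p - 1 < q)
    (hr : 0 < r) (hw : 0 < w) (hw' : w' ≠ 0) :
    w = r ^ (-((p + σ) / (q + 1 - p))) *
      (|s r w w'| ^ (p - 1) * |z p q σ ε r w w'|) ^ (1 / (q + 1 - p)) := by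
  have hk : q + 1 - p ≠ 0 := by linarith
  rw [abs_s_rpow_mul_abs_z hε hr hw hw', mul_rpow (by positivity) (by positivity),
    ← rpow_mul hr.le, ← rpow_mul hw.le, mul_one_div, mul_one_div, div_self hk, rpow_one,
    ← mul_assoc, ← rpow_add hr, neg_add_cancel, rpow_zero, one_mul]

lemma z_eq_of_radial {p q NN σ ε r w'' : ℝ} {w w' : ℝ → ℝ} (hr : 0 < r) (hw'r : w' r ≠ 0)
    (hw' : HasDerivAt w' w'' r)
    (heq : -(deriv (fun x => |w' x| ^ (p - 2) * w' x) r)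
        - ((NN - 1) / r) * (|w' r| ^ (p - 2) * w' r) = ε * r ^ σ * w r ^ q) :
    z p q σ ε r (w r) (w' r) = NN - 1 + (p - 1) * (r * w'' / w' r) := by
  have hflux_deriv : HasDerivAt (fun x => |w' x| ^ (p - 2) * w' x)
      ((p - 2 + 1) * |w' r| ^ (p - 2) * w'') r :=
    (hasDerivAt_abs_rpow_mul_self (p - 2) hw'r).comp r hw'
  rw [hflux_deriv.deriv] at heq
  -- `|w'|^(-p) w'` is the reciprocal of the flux `|w'|^(p-2) w'`.
  have hflux := abs_rpow_sub_two_mul_self_mul_abs_rpow_neg_mul_self p hw'r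
  have hinv : (w' r)⁻¹ = |w' r| ^ (p - 2) * (|w' r| ^ (-p) * w' r) :=
    inv_eq_of_mul_eq_one_right (by linear_combination hflux)
  have heq_r : ε * r ^ σ * w r ^ q * r
      = -((p - 1) * |w' r| ^ (p - 2) * w'' * r) - (NN - 1) * (|w' r| ^ (p - 2) * w' r) := by
    field_simp at heq
    linear_combination -heq
  rw [z, rpow_add hr, rpow_one, div_eq_mul_inv, hinv]
  linear_combination -(|w' r| ^ (-p) * w' r) * heq_r + (NN - 1) * hflux

lemma hasDerivAt_s_comp_exp {w w' : ℝ → ℝ} {w'' t : ℝ} (hw : HasDerivAt w (w' (exp t)) (exp t))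
    (hw' : HasDerivAt w' w'' (exp t)) (hw0 : w (exp t) ≠ 0) (hw'0 : w' (exp t) ≠ 0) :
    HasDerivAt (fun u => s (exp u) (w (exp u)) (w' (exp u)))
      (s (exp t) (w (exp t)) (w' (exp t)) *
        (1 + s (exp t) (w (exp t)) (w' (exp t)) + exp t * w'' / w' (exp t))) t := by
  have hexp := hasDerivAt_exp t
  refine ((hexp.mul (hw'.comp t hexp)).div (hw.comp t hexp) hw0).neg.congr_deriv ?_
  simp only [s, Function.comp_apply, Pi.mul_apply]
  field_simp
  ring

lemma hasDerivAt_z_comp_exp {p q σ ε : ℝ} {w w' : ℝ → ℝ} {w'' t : ℝ}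
    (hw : HasDerivAt w (w' (exp t)) (exp t))
    (hw' : HasDerivAt w' w'' (exp t)) (hw0 : w (exp t) ≠ 0) (hw'0 : w' (exp t) ≠ 0) :
    HasDerivAt (fun u => z p q σ ε (exp u) (w (exp u)) (w' (exp u)))
      (z p q σ ε (exp t) (w (exp t)) (w' (exp t)) *
        (1 + σ - q * s (exp t) (w (exp t)) (w' (exp t)) + (1 - p) * (exp t * w'' / w' (exp t))))
      t := by
  have hexp := hasDerivAt_exp t
  have hrσ := (hasDerivAt_rpow_const (p := 1 + σ) (Or.inl (exp_pos t).ne')).comp t hexp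
  have hwq := (hasDerivAt_rpow_const (p := q) (Or.inl hw0)).comp t (hw.comp t hexp)
  have hflux := (hasDerivAt_abs_rpow_mul_self (-p) hw'0).comp t (hw'.comp t hexp)
  have hz : (fun u => z p q σ ε (exp u) (w (exp u)) (w' (exp u))) = fun u =>
      -(ε * exp u ^ (1 + σ) * w (exp u) ^ q * (|w' (exp u)| ^ (-p) * w' (exp u))) := by
    funext u; simp only [z, mul_assoc]
  rw [hz]
  refine (((hrσ.const_mul ε).mul hwq).mul hflux).neg.congr_deriv ?_
  simp only [z, s, Function.comp_apply, Pi.mul_apply, rpow_sub_one (exp_pos t).ne',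
    rpow_sub_one hw0]
  field_simp
  ring

end HardyHenon

theorem stmt13_general (p q NN σ ε : ℝ) (hp : 1 < p) (hq : p - 1 < q)
    (hε : ε = 1 ∨ ε = -1) (a b : ℝ)
    (w : ℝ → ℝ) (hw : ContDiffOn ℝ 2 w (Set.Ioo a b))
    (hwpos : ∀ r ∈ Set.Ioo a b, 0 < w r)
    (hw' : ∀ r ∈ Set.Ioo a b, deriv w r ≠ 0)
    (heq : ∀ r ∈ Set.Ioo a b,
      -(deriv (fun s : ℝ => |deriv w s| ^ (p - 2) * deriv w s) r)
          - ((NN - 1) / r) * (|deriv w r| ^ (p - 2) * deriv w r)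
        = ε * r ^ σ * w r ^ q) :
    let S : ℝ → ℝ := fun t => -(Real.exp t * deriv w (Real.exp t) / w (Real.exp t))
    let Z : ℝ → ℝ := fun t =>
      -(ε * Real.exp t ^ (1 + σ) * w (Real.exp t) ^ q *
        |deriv w (Real.exp t)| ^ (-p) * deriv w (Real.exp t))
    ∀ t : ℝ, Real.exp t ∈ Set.Ioo a b →
      deriv S t = S t * ((p - NN) / (p - 1) + S t + Z t / (p - 1)) ∧
      deriv Z t = Z t * (NN + σ - q * S t - Z t) ∧
      w (Real.exp t) =
        Real.exp t ^ (-((p + σ) / (q + 1 - p))) *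
          (|S t| ^ (p - 1) * |Z t|) ^ (1 / (q + 1 - p)) := by
  intro S Z t ht
  have hr : 0 < exp t := exp_pos t
  have hw0 : 0 < w (exp t) := hwpos _ ht
  have hw'0 : deriv w (exp t) ≠ 0 := hw' _ ht
  have hwd : HasDerivAt w (deriv w (exp t)) (exp t) :=
    ((hw.differentiableOn two_ne_zero).differentiableAt (isOpen_Ioo.mem_nhds ht)).hasDerivAt
  have hw'd := hw.hasDerivAt_deriv isOpen_Ioo ht
  have hz : Z t = NN - 1 + (p - 1) * (exp t * deriv (deriv w) (exp t) / deriv w (exp t)) :=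
    HardyHenon.z_eq_of_radial hr hw'0 hw'd (heq _ ht)
  have hS : HasDerivAt S
      (S t * (1 + S t + exp t * deriv (deriv w) (exp t) / deriv w (exp t))) t :=
    HardyHenon.hasDerivAt_s_comp_exp hwd hw'd hw0.ne' hw'0
  have hZ : HasDerivAt Z (Z t * (1 + σ - q * S t
      + (1 - p) * (exp t * deriv (deriv w) (exp t) / deriv w (exp t)))) t :=
    HardyHenon.hasDerivAt_z_comp_exp hwd hw'd hw0.ne' hw'0
  have hp1 : p - 1 ≠ 0 := by linarith
  have hS_rate : 1 + exp t * deriv (deriv w) (exp t) / deriv w (exp t)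
      = (p - NN) / (p - 1) + Z t / (p - 1) := by
    rw [← add_div, eq_div_iff hp1]
    linear_combination -hz
  refine ⟨?_, ?_, ?_⟩
  · rw [hS.deriv]
    linear_combination S t * hS_rate
  · rw [hZ.deriv]
    linear_combination Z t * hz
  · exact HardyHenon.eq_rpow_mul_abs_s_rpow_mul_abs_z
      (by rcases hε with rfl | rfl <;> norm_num) hq hr hw0 hw'0

/-- The logarithmic substitution `s(t) = -r w'/w`, `z(t) = -ε r^(1+σ) w^𝐪 |w'|^(-𝐩) w'`,
`t = ln r`, turns the radial `𝐩`-Laplace Hardy–Hénon equation into a quadratic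
autonomous system, and `w` is recovered by `w = r^(-γ)(|s|^(𝐩-1)|z|)^(1/(𝐪+1-𝐩))`. -/
theorem stmt13 (p q NN σ ε : ℝ) (hp : 1 < p) (hq : p - 1 < q)
    (hε : ε = 1 ∨ ε = -1) (a b : ℝ) (ha : 0 < a)
    (w : ℝ → ℝ) (hw : ContDiffOn ℝ 2 w (Set.Ioo a b))
    (hwpos : ∀ r ∈ Set.Ioo a b, 0 < w r)
    (hw' : ∀ r ∈ Set.Ioo a b, deriv w r ≠ 0)
    (heq : ∀ r ∈ Set.Ioo a b,
      -(deriv (fun s : ℝ => |deriv w s| ^ (p - 2) * deriv w s) r)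
          - ((NN - 1) / r) * (|deriv w r| ^ (p - 2) * deriv w r)
        = ε * r ^ σ * w r ^ q) :
    let S : ℝ → ℝ := fun t => -(Real.exp t * deriv w (Real.exp t) / w (Real.exp t))
    let Z : ℝ → ℝ := fun t =>
      -(ε * Real.exp t ^ (1 + σ) * w (Real.exp t) ^ q *
        |deriv w (Real.exp t)| ^ (-p) * deriv w (Real.exp t))
    ∀ t : ℝ, Real.exp t ∈ Set.Ioo a b →
      deriv S t = S t * ((p - NN) / (p - 1) + S t + Z t / (p - 1)) ∧
      deriv Z t = Z t * (NN + σ - q * S t - Z t) ∧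
      w (Real.exp t) =
        Real.exp t ^ (-((p + σ) / (q + 1 - p))) *
          (|S t| ^ (p - 1) * |Z t|) ^ (1 / (q + 1 - p)) :=
  stmt13_general p q NN σ ε hp hq hε a b w hw hwpos hw' heq
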